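/- Define θ^inv_ρ : V → ℝ by θ^inv_ρ(x) = inf_{w ∈ W}(a(w) + B(x,w)) + (1/8)Q(ρ) + (1/2)Q(x) − (1/2)B(x,ρ). Then θ^inv_ρ(x) ≥ 0 for all x ∈ V, and θ^inv_ρ(ρ/2) = 0. In particular, the minimum value of the invariant tropical theta function with characteristic ρ is equal to zero. -/
import Mathlib


noncomputable section

/-- The inclusion of the lattice `W = ℤ^g` into `V = ℝ^g`. -/
def latt {g : ℕ} (w : Fin g → ℤ) : Fin g → ℝ := fun i => (w i : ℝ)

/-- The quadratic function `a(x) = (1/2) B(x,x) - (1/2) B(ρ,x)` associated to a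
bilinear form `B` and a characteristic `ρ ∈ W`. -/
def quadFn {g : ℕ} (B : (Fin g → ℝ) →ₗ[ℝ] (Fin g → ℝ) →ₗ[ℝ] ℝ)
    (ρ : Fin g → ℤ) (x : Fin g → ℝ) : ℝ :=
  (1 / 2) * B x x - (1 / 2) * B (latt ρ) x

/-- The invariant tropical theta function with characteristic `ρ`, evaluated
at the linear form `l = B(x,·)`:
`θ^inv_ρ(x) = inf_{w ∈ W}(a(w) + B(x,w)) + (1/8) Q(ρ) + (1/2) Q(x) - (1/2) B(x,ρ)`. -/
def thetaInv {g : ℕ} (B : (Fin g → ℝ) →ₗ[ℝ] (Fin g → ℝ) →ₗ[ℝ] ℝ)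
    (ρ : Fin g → ℤ) (x : Fin g → ℝ) : ℝ :=
  (⨅ w : Fin g → ℤ, (quadFn B ρ (latt w) + B x (latt w)))
    + (1 / 8) * B (latt ρ) (latt ρ) + (1 / 2) * B x x - (1 / 2) * B x (latt ρ)

lemma key {g : ℕ} (B : (Fin g → ℝ) →ₗ[ℝ] (Fin g → ℝ) →ₗ[ℝ] ℝ)
    (hsymm : ∀ x y, B x y = B y x)
    (ρ : Fin g → ℤ) (x : Fin g → ℝ) (w : Fin g → ℤ) :
    quadFn B ρ (latt w) + B x (latt w)
      + ((1 / 8) * B (latt ρ) (latt ρ) + (1 / 2) * B x x - (1 / 2) * B x (latt ρ))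
    = (1 / 2) * B (latt w + x - (1/2 : ℝ) • latt ρ) (latt w + x - (1/2 : ℝ) • latt ρ) := by
  simp only [quadFn, map_add, map_sub, map_smul, LinearMap.add_apply, LinearMap.sub_apply,
    LinearMap.smul_apply, smul_eq_mul]
  rw [hsymm (latt w) x, hsymm (latt ρ) x, hsymm (latt ρ) (latt w)]
  ring

/-- `θ^inv_ρ(x) ≥ 0` for all `x ∈ V`, and `θ^inv_ρ(ρ/2) = 0`; in particular
the minimum value of the invariant tropical theta function with characteristic
`ρ` is zero. -/
theorem stmt7 (g : ℕ) (hg : 0 < g)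
    (B : (Fin g → ℝ) →ₗ[ℝ] (Fin g → ℝ) →ₗ[ℝ] ℝ)
    (hsymm : ∀ x y, B x y = B y x)
    (hpsd : ∀ x : Fin g → ℝ, 0 ≤ B x x)
    (ρ : Fin g → ℤ) :
    (∀ x : Fin g → ℝ, 0 ≤ thetaInv B ρ x) ∧
    thetaInv B ρ ((1 / 2 : ℝ) • latt ρ) = 0 := by
  have hbound : ∀ (x : Fin g → ℝ) (w : Fin g → ℤ),
      -((1 / 8) * B (latt ρ) (latt ρ) + (1 / 2) * B x x - (1 / 2) * B x (latt ρ))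
        ≤ quadFn B ρ (latt w) + B x (latt w) := by
    intro x w
    have := key B hsymm ρ x w
    have h2 := hpsd (latt w + x - (1/2 : ℝ) • latt ρ)
    nlinarith
  have hge : ∀ x : Fin g → ℝ, 0 ≤ thetaInv B ρ x := by
    intro x
    have : -((1 / 8) * B (latt ρ) (latt ρ) + (1 / 2) * B x x - (1 / 2) * B x (latt ρ))
        ≤ ⨅ w : Fin g → ℤ, (quadFn B ρ (latt w) + B x (latt w)) :=
      le_ciInf (hbound x)
    unfold thetaInv
    linarith
  refine ⟨hge, le_antisymm ?_ (hge _)⟩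
  set x := (1 / 2 : ℝ) • latt ρ with hx
  have hzero : latt (0 : Fin g → ℤ) = (0 : Fin g → ℝ) := by
    funext i; simp [latt]
  have hf0 : quadFn B ρ (latt (0 : Fin g → ℤ)) + B x (latt (0 : Fin g → ℤ)) = 0 := by
    simp [quadFn, hzero]
  have hle : (⨅ w : Fin g → ℤ, (quadFn B ρ (latt w) + B x (latt w))) ≤ 0 := by
    rw [← hf0]
    exact ciInf_le ⟨_, by rintro y ⟨w, rfl⟩; exact hbound x w⟩ 0
  have hc : (1 / 8) * B (latt ρ) (latt ρ) + (1 / 2) * B x x - (1 / 2) * B x (latt ρ) = 0 := by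
    simp only [hx, map_smul, LinearMap.smul_apply, smul_eq_mul]
    ring
  unfold thetaInv
  linarith
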